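/- Let g, θ_{k−1} ∈ ℝ^d, H a symmetric d×d matrix, and α > 0. If θ_k minimizes over θ ∈ ℝ^d the cubic model m(θ) = ⟨g, θ−θ_{k−1}⟩ + (1/2)⟨H(θ−θ_{k−1}), θ−θ_{k−1}⟩ + (α/6)‖θ−θ_{k−1}‖³, then the minimum value satisfies m(θ_k) ≤ −(α/12)‖θ_k − θ_{k−1}‖³, provided the first-order condition g + H(θ_k−θ_{k−1}) + (α/2)‖θ_k−θ_{k−1}‖(θ_k−θ_{k−1}) = 0 and the second-order condition H + (α/2)‖θ_k−θ_{k−1}‖·I ⪰ 0 hold. -/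
import Mathlib


open RealInnerProductSpace

theorem stmt_14 {d : ℕ} (g θkm1 θk : EuclideanSpace ℝ (Fin d))
    (Hm : EuclideanSpace ℝ (Fin d) →L[ℝ] EuclideanSpace ℝ (Fin d))
    (hsymm : ∀ x y, ⟪Hm x, y⟫ = ⟪x, Hm y⟫) (α : ℝ) (hα : 0 < α)
    (m : EuclideanSpace ℝ (Fin d) → ℝ)
    (hm : ∀ θ, m θ = ⟪g, θ - θkm1⟫ + (1 / 2) * ⟪Hm (θ - θkm1), θ - θkm1⟫ +
        (α / 6) * ‖θ - θkm1‖ ^ 3)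
    (hmin : ∀ θ, m θk ≤ m θ)
    (hfoc : g + Hm (θk - θkm1) + (α / 2 * ‖θk - θkm1‖) • (θk - θkm1) = 0)
    (hsoc : ∀ v, 0 ≤ ⟪v, Hm v⟫ + (α / 2) * ‖θk - θkm1‖ * ‖v‖ ^ 2) :
    m θk ≤ -(α / 12) * ‖θk - θkm1‖ ^ 3 := by
  set s := θk - θkm1 with hs
  have hg : g = -(Hm s) - (α / 2 * ‖s‖) • s := by
    have := hfoc
    rw [add_eq_zero_iff_eq_neg] at this
    · linear_combination (norm := module) this
  have hgs : ⟪g, s⟫ = -⟪Hm s, s⟫ - (α / 2 * ‖s‖) * ‖s‖ ^ 2 := by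
    rw [hg, inner_sub_left, inner_neg_left, inner_smul_left, real_inner_self_eq_norm_sq]
    simp only [conj_trivial]
  have hkey : -(α / 2) * ‖s‖ ^ 3 ≤ ⟪Hm s, s⟫ := by
    have h1 : ⟪s, Hm s⟫ = ⟪Hm s, s⟫ := real_inner_comm _ _
    have h2 := hsoc s
    rw [h1] at h2
    nlinarith [pow_succ ‖s‖ 2]
  rw [hm θk, ← hs, hgs]
  nlinarith [pow_succ ‖s‖ 2]
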